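/- Let m ≥ 2 be an integer, h > 0, and let λ be a real number with |λ| < e^{−h} that is a root of the polynomial P_{2m−2}, where P_{2m−2}(λ) = (1−e^{2h})(1−λ)^{2m−2} − 2(λ(e^{2h}+1) − e^{h}(λ²+1)) · Σ_{j=1}^{m−1} (h^{2j−1}/(2j−1)!) · (1−λ)^{2m−2−2j} · E_{2j−2}(λ). Then Σ_{γ=1}^{∞} λ^γ ψ_m(hγ) = 0. -/

import Mathlib

/-!
For `x > 0`, `ψ_m(x)` is `(e^x - e^{-x})/4` minus an odd polynomial, so the series splits into
the two geometric series in `λe^{±h}` and the series `∑ (γ+1)^n λ^γ`. Expanding `X^n` in the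
falling factorials with coefficients `Δ^i 0^n / i!` (Newton) and evaluating at `-(γ+1)` writes
`(γ+1)^n` as a signed combination of `C(γ+i, i)`, whose generating functions are
`(1-λ)^{-(i+1)}`; for `n = 2k-1` this gives `E_{2k-2}(λ)/(1-λ)^{2k}`. Over a common denominator
the whole sum is `-λ P_{2m-2}(λ) / (4 (1-λe^h)(e^h-λ)(1-λ)^{2m-2})`, which vanishes at a root
of `P_{2m-2}`.
-/

/-- The `i`-th forward finite difference of the function `γ ↦ γ^k` evaluated at `0`,
i.e. `Δ^i 0^k = ∑_{j=0}^{i} (-1)^(i-j) C(i,j) j^k` (with `0^0 = 1`). -/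
noncomputable def finDiff0 (i k : ℕ) : ℝ :=
  ∑ j ∈ Finset.range (i + 1), (-1 : ℝ) ^ (i - j) * (i.choose j : ℝ) * (j : ℝ) ^ k

/-- The Euler polynomial of degree `k`:
`E_k(λ) = ∑_{i=1}^{k+1} Δ^i 0^{k+1} (λ-1)^{k+1-i}`. -/
noncomputable def eulerE (k : ℕ) (x : ℝ) : ℝ :=
  ∑ i ∈ Finset.Icc 1 (k + 1), finDiff0 i (k + 1) * (x - 1) ^ (k + 1 - i)

/-- `ψ_m(x) = (sign x)/2 · ((e^x - e^{-x})/2 - ∑_{k=1}^{m-1} x^{2k-1}/(2k-1)!)`, the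
fundamental solution of `d^{2m}/dx^{2m} - d^{2m-2}/dx^{2m-2}`. -/
noncomputable def psiM (m : ℕ) (x : ℝ) : ℝ :=
  Real.sign x / 2 *
    ((Real.exp x - Real.exp (-x)) / 2 -
      ∑ k ∈ Finset.Icc 1 (m - 1), x ^ (2 * k - 1) / (Nat.factorial (2 * k - 1) : ℝ))

/-- The polynomial `P_{2m-2}(λ) = (1-e^{2h})(1-λ)^{2m-2}
  - 2(λ(e^{2h}+1) - e^h(λ²+1)) ∑_{j=1}^{m-1} (h^{2j-1}/(2j-1)!) (1-λ)^{2m-2-2j} E_{2j-2}(λ)`. -/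
noncomputable def Ppoly (m : ℕ) (h x : ℝ) : ℝ :=
  (1 - Real.exp (2 * h)) * (1 - x) ^ (2 * m - 2) -
    2 * (x * (Real.exp (2 * h) + 1) - Real.exp h * (x ^ 2 + 1)) *
      ∑ j ∈ Finset.Icc 1 (m - 1),
        h ^ (2 * j - 1) / (Nat.factorial (2 * j - 1) : ℝ) *
          (1 - x) ^ (2 * m - 2 - 2 * j) * eulerE (2 * j - 2) x

open Finset Nat fwdDiff Real

lemma finDiff0_eq_fwdDiff_iter (i k : ℕ) :
    finDiff0 i k = (Δ_[1])^[i] (fun r : ℝ => r ^ k) 0 := by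
  rw [fwdDiff_iter_eq_sum_shift]
  simp [finDiff0, zsmul_eq_mul, mul_assoc]

lemma finDiff0_eq_zero_of_lt {i k : ℕ} (h : k < i) : finDiff0 i k = 0 := by
  rw [finDiff0_eq_fwdDiff_iter, fwdDiff_iter_pow_eq_zero_of_lt h, Pi.zero_apply]

lemma natCast_pow_eq_sum_finDiff0_mul_choose (γ n : ℕ) :
    (γ : ℝ) ^ n = ∑ i ∈ range (n + 1), finDiff0 i n * γ.choose i := by
  have newton := shift_eq_sum_fwdDiff_iter (1 : ℝ) (fun r : ℝ => r ^ n) γ 0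
  simp only [zero_add, nsmul_eq_mul, mul_one, ← finDiff0_eq_fwdDiff_iter] at newton
  have hγ : ∑ i ∈ range (γ + 1), (γ.choose i : ℝ) * finDiff0 i n
      = ∑ i ∈ range (n + γ + 1), finDiff0 i n * γ.choose i :=
    sum_subset (range_subset_range.2 (by omega)) (fun i _ hi => by
      simp [Nat.choose_eq_zero_of_lt (not_lt.1 (mt mem_range.2 hi))]) |>.trans
      (sum_congr rfl fun _ _ => mul_comm _ _)
  have hn : ∑ i ∈ range (n + 1), finDiff0 i n * γ.choose i
      = ∑ i ∈ range (n + γ + 1), finDiff0 i n * γ.choose i :=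
    sum_subset (range_subset_range.2 (by omega)) (fun i _ hi => by
      simp [finDiff0_eq_zero_of_lt (not_lt.1 (mt mem_range.2 hi))])
  rw [newton, hγ, hn]

open Polynomial in
lemma X_pow_eq_sum_finDiff0_mul_descPochhammer (n : ℕ) :
    (X : ℝ[X]) ^ n = ∑ i ∈ range (n + 1), C (finDiff0 i n / i !) * descPochhammer ℝ i := by
  refine eq_of_infinite_eval_eq _ _ ((Set.infinite_range_of_injective Nat.cast_injective).mono ?_)
  rintro _ ⟨γ, rfl⟩
  change _ = _
  simp only [eval_pow, eval_X, eval_finsetSum, eval_mul, eval_C,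
    natCast_pow_eq_sum_finDiff0_mul_choose, Nat.cast_choose_eq_descPochhammer_div]
  exact sum_congr rfl fun i _ => by ring

open Polynomial in
lemma descPochhammer_eval_neg_natCast_add_one (γ i : ℕ) :
    (descPochhammer ℝ i).eval (-((γ : ℝ) + 1)) = (-1) ^ i * i ! * (γ + i).choose i := by
  have := ascPochhammer_eval_neg_eq_descPochhammer (R := ℝ) (-((γ : ℝ) + 1)) i
  rw [neg_neg, ← Nat.cast_succ, ← Nat.cast_ascFactorial,
    Nat.ascFactorial_eq_factorial_mul_choose] at this
  rw [mul_assoc, ← Nat.cast_mul, this, ← mul_assoc, ← pow_add, ← two_mul, pow_mul]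
  norm_num

lemma natCast_add_one_pow_eq_sum_finDiff0_mul_choose (γ n : ℕ) :
    ((γ : ℝ) + 1) ^ n =
      ∑ i ∈ range (n + 1), (-1) ^ (n + i) * finDiff0 i n * (γ + i).choose i := by
  have h := congrArg (Polynomial.eval (-((γ : ℝ) + 1)))
    (X_pow_eq_sum_finDiff0_mul_descPochhammer n)
  simp only [Polynomial.eval_pow, Polynomial.eval_X, Polynomial.eval_finsetSum,
    Polynomial.eval_mul, Polynomial.eval_C, descPochhammer_eval_neg_natCast_add_one] at h
  calc ((γ : ℝ) + 1) ^ n = (-1) ^ n * (-((γ : ℝ) + 1)) ^ n := by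
        rw [← mul_pow]; ring
    _ = _ := by
      rw [h, mul_sum]
      refine sum_congr rfl fun i _ => ?_
      rw [pow_add]
      field_simp

lemma hasSum_add_one_pow_mul_geometric (n : ℕ) {x : ℝ} (hx : |x| < 1) :
    HasSum (fun γ : ℕ => ((γ : ℝ) + 1) ^ n * x ^ γ)
      (∑ i ∈ range (n + 1), (-1) ^ (n + i) * finDiff0 i n * (1 / (1 - x) ^ (i + 1))) := by
  have hx' : ‖x‖ < 1 := by rwa [Real.norm_eq_abs]
  have expand (γ : ℕ) : ((γ : ℝ) + 1) ^ n * x ^ γ = ∑ i ∈ range (n + 1),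
      (-1) ^ (n + i) * finDiff0 i n * ((γ + i).choose i * x ^ γ) := by
    rw [natCast_add_one_pow_eq_sum_finDiff0_mul_choose, sum_mul]
    exact sum_congr rfl fun i _ => by ring
  simp_rw [expand]
  exact hasSum_sum fun i _ =>
    (hasSum_choose_mul_geometric_of_norm_lt_one i hx').mul_left ((-1) ^ (n + i) * finDiff0 i n)

lemma sum_finDiff0_div_eq_eulerE (k : ℕ) {x : ℝ} (hx : x ≠ 1) :
    ∑ i ∈ range (k + 2), (-1) ^ (k + 1 + i) * finDiff0 i (k + 1) * (1 / (1 - x) ^ (i + 1))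
      = eulerE k x / (1 - x) ^ (k + 2) := by
  have hx' : 1 - x ≠ 0 := sub_ne_zero.2 hx.symm
  rw [eulerE, sum_div, eq_comm]
  refine (sum_subset (fun i hi => ?_) (fun i hi hi' => ?_)).trans (sum_congr rfl fun i hi => ?_)
  · simp only [mem_Icc, mem_range] at hi ⊢; omega
  · obtain rfl : i = 0 := by simp only [mem_Icc, mem_range] at hi hi'; omega
    simp [finDiff0]
  · obtain ⟨j, hj⟩ : ∃ j, k + 1 = j + i := ⟨k + 1 - i, by simp at hi; omega⟩
    rw [hj, Nat.add_sub_cancel, show k + 2 = j + (i + 1) by omega, pow_add,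
      show x - 1 = -(1 - x) by ring, neg_pow, add_assoc, ← two_mul, pow_add (-1 : ℝ) j, pow_mul,
      neg_one_sq, one_pow, mul_one]
    field_simp

lemma hasSum_add_one_pow_succ_mul_geometric (k : ℕ) {x : ℝ} (hx : |x| < 1) :
    HasSum (fun γ : ℕ => ((γ : ℝ) + 1) ^ (k + 1) * x ^ γ)
      (eulerE k x / (1 - x) ^ (k + 2)) := by
  rw [← sum_finDiff0_div_eq_eulerE k (by rintro rfl; simp at hx)]
  exact hasSum_add_one_pow_mul_geometric (k + 1) hx

lemma pow_succ_mul_psiM (m : ℕ) {h : ℝ} (hh : 0 < h) (l : ℝ) (γ : ℕ) :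
    l ^ (γ + 1) * psiM m (h * ((γ : ℝ) + 1)) =
      ((l * exp h) ^ (γ + 1) - (l * exp (-h)) ^ (γ + 1)) / 4 -
        (∑ k ∈ Icc 1 (m - 1), h ^ (2 * k - 1) / (2 * k - 1)! * l *
          (((γ : ℝ) + 1) ^ (2 * k - 1) * l ^ γ)) / 2 := by
  have hexp (t : ℝ) : exp (t * ((γ : ℝ) + 1)) = exp t ^ (γ + 1) := by
    rw [← Real.exp_nat_mul]; push_cast; ring_nf
  have hsum : ∑ k ∈ Icc 1 (m - 1), h ^ (2 * k - 1) / (2 * k - 1)! * l *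
      (((γ : ℝ) + 1) ^ (2 * k - 1) * l ^ γ) =
        l ^ (γ + 1) *
          ∑ k ∈ Icc 1 (m - 1), (h * ((γ : ℝ) + 1)) ^ (2 * k - 1) / (2 * k - 1)! := by
    rw [mul_sum]
    exact sum_congr rfl fun k _ => by rw [mul_pow]; ring
  rw [psiM, Real.sign_of_pos (by positivity), ← neg_mul, hexp, hexp, hsum]
  ring

lemma abs_mul_exp_lt_one {h l : ℝ} (hh : 0 < h) (hl : |l| < exp (-h)) :
    |l| < 1 ∧ |l * exp h| < 1 ∧ |l * exp (-h)| < 1 := by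
  have hexp : exp (-h) < 1 := Real.exp_lt_one_iff.2 (neg_lt_zero.2 hh)
  have hl1 : |l| < 1 := hl.trans hexp
  refine ⟨hl1, ?_, ?_⟩
  · rw [abs_mul, abs_of_pos (exp_pos h)]
    calc |l| * exp h < exp (-h) * exp h := by gcongr
      _ = 1 := by rw [← Real.exp_add, neg_add_cancel, exp_zero]
  · rw [abs_mul, abs_of_pos (exp_pos _)]
    nlinarith [abs_nonneg l, exp_pos (-h)]

lemma hasSum_pow_mul_psiM (m : ℕ) {h l : ℝ} (hh : 0 < h) (hl : |l| < exp (-h)) :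
    HasSum (fun γ : ℕ => l ^ (γ + 1) * psiM m (h * ((γ : ℝ) + 1)))
      ((l * exp h / (1 - l * exp h) - l * exp (-h) / (1 - l * exp (-h))) / 4 -
        (∑ k ∈ Icc 1 (m - 1), h ^ (2 * k - 1) / (2 * k - 1)! * l *
          (eulerE (2 * k - 2) l / (1 - l) ^ (2 * k))) / 2) := by
  obtain ⟨hl1, hlE, hlE'⟩ := abs_mul_exp_lt_one hh hl
  have hgeom {r : ℝ} (hr : |r| < 1) : HasSum (fun γ : ℕ => r ^ (γ + 1)) (r / (1 - r)) := by
    simp_rw [_root_.pow_succ', div_eq_mul_inv]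
    exact (hasSum_geometric_of_norm_lt_one (by rwa [Real.norm_eq_abs])).mul_left r
  have hpoly : HasSum
      (fun γ : ℕ => ∑ k ∈ Icc 1 (m - 1), h ^ (2 * k - 1) / (2 * k - 1)! * l *
        (((γ : ℝ) + 1) ^ (2 * k - 1) * l ^ γ))
      (∑ k ∈ Icc 1 (m - 1), h ^ (2 * k - 1) / (2 * k - 1)! * l *
        (eulerE (2 * k - 2) l / (1 - l) ^ (2 * k))) := by
    refine hasSum_sum fun k hk => HasSum.mul_left _ ?_
    obtain ⟨j, rfl⟩ : ∃ j, k = j + 1 := ⟨k - 1, by simp at hk; omega⟩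
    simpa [show 2 * (j + 1) - 1 = 2 * j + 1 by omega, show 2 * (j + 1) - 2 = 2 * j by omega,
      show 2 * (j + 1) = 2 * j + 2 by omega] using hasSum_add_one_pow_succ_mul_geometric (2 * j) hl1
  simp_rw [pow_succ_mul_psiM m hh l]
  exact (((hgeom hlE).sub (hgeom hlE')).div_const 4).sub (hpoly.div_const 2)

lemma sum_mul_eulerE_div_eq (m : ℕ) (h : ℝ) {l : ℝ} (hl : l ≠ 1) :
    ∑ k ∈ Icc 1 (m - 1), h ^ (2 * k - 1) / (2 * k - 1)! * l *
        (eulerE (2 * k - 2) l / (1 - l) ^ (2 * k)) =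
      l * (∑ k ∈ Icc 1 (m - 1), h ^ (2 * k - 1) / (2 * k - 1)! *
        (1 - l) ^ (2 * m - 2 - 2 * k) * eulerE (2 * k - 2) l) / (1 - l) ^ (2 * m - 2) := by
  have hl' : 1 - l ≠ 0 := sub_ne_zero.2 hl.symm
  rw [mul_sum, sum_div]
  refine sum_congr rfl fun k hk => ?_
  have hsplit : (1 - l) ^ (2 * m - 2) = (1 - l) ^ (2 * m - 2 - 2 * k) * (1 - l) ^ (2 * k) := by
    rw [← pow_add]; congr 1; simp at hk; omega
  rw [hsplit]
  field_simp

lemma psiM_series_value_eq_Ppoly (m : ℕ) {h l : ℝ} (h₁ : l * exp h ≠ 1) (h₂ : l ≠ exp h)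
    (h₃ : l ≠ 1) :
    (l * exp h / (1 - l * exp h) - l * exp (-h) / (1 - l * exp (-h))) / 4 -
        (∑ k ∈ Icc 1 (m - 1), h ^ (2 * k - 1) / (2 * k - 1)! * l *
          (eulerE (2 * k - 2) l / (1 - l) ^ (2 * k))) / 2 =
      -l * Ppoly m h l / (4 * (1 - l * exp h) * (exp h - l) * (1 - l) ^ (2 * m - 2)) := by
  -- `(1 - λe^h)(e^h - λ) = e^h(λ² + 1) - λ(e^{2h} + 1)` multiplies the sum in `Ppoly`
  have h₁' : 1 - l * exp h ≠ 0 := sub_ne_zero.2 h₁.symm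
  have h₂' : exp h - l ≠ 0 := sub_ne_zero.2 h₂.symm
  have h₃' : (1 - l) ^ (2 * m - 2) ≠ 0 := pow_ne_zero _ (sub_ne_zero.2 h₃.symm)
  have hE : exp h ≠ 0 := (exp_pos h).ne'
  rw [sum_mul_eulerE_div_eq m h h₃, Ppoly, Real.exp_neg, show 2 * h = h + h by ring, Real.exp_add]
  rw [show 1 - l * (exp h)⁻¹ = (exp h - l) / exp h by field_simp]
  field_simp
  ring

theorem hasSum_pow_mul_psiM_root_general (m : ℕ) (h : ℝ) (hh : 0 < h)
    (l : ℝ) (hl : |l| < Real.exp (-h)) (hroot : Ppoly m h l = 0) :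
    HasSum (fun γ : ℕ => l ^ (γ + 1) * psiM m (h * ((γ : ℝ) + 1))) 0 := by
  obtain ⟨hl1, hlE, -⟩ := abs_mul_exp_lt_one hh hl
  have h₁ : l * exp h ≠ 1 := fun h₁ => by simp [h₁] at hlE
  have h₃ : l ≠ 1 := fun h₃ => by simp [h₃] at hl1
  have h₂ : l ≠ exp h := by
    intro h₂
    linarith [(abs_lt.1 hl1).2, add_one_le_exp h]
  simpa [psiM_series_value_eq_Ppoly m h₁ h₂ h₃, hroot] using hasSum_pow_mul_psiM m hh hl

/-- Let `m ≥ 2`, `h > 0` and `|λ| < e^{-h}` be a root of `P_{2m-2}`.  Then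
`∑_{γ=1}^{∞} λ^γ ψ_m(hγ) = 0`. -/
theorem hasSum_pow_mul_psiM_root (m : ℕ) (hm : 2 ≤ m) (h : ℝ) (hh : 0 < h)
    (l : ℝ) (hl : |l| < Real.exp (-h)) (hroot : Ppoly m h l = 0) :
    HasSum (fun γ : ℕ => l ^ (γ + 1) * psiM m (h * ((γ : ℝ) + 1))) 0 :=
  hasSum_pow_mul_psiM_root_general m h hh l hl hroot
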